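/- arXiv:2312.12960 — 3 statements merged into one kernel-verified Lean document; each statement's English description precedes it below -/
import Mathlib

section
/- Let G be a connected claw-free graph and let F be the set of edges of G that are not on any triangle. Then in the subgraph of G formed by the edges of F, every vertex that is incident to at least two edges of F has degree exactly 2 in G; consequently, every connected component of this subgraph is a path. -/
/-- The set of edges of `G` crossing the partition `(R, Rᶜ)`. -/
def crossEdges {V : Type*} (G : SimpleGraph V) (R : Set V) : Set (Sym2 V) :=
  {e | e ∈ G.edgeSet ∧ ∃ u v : V, e = s(u, v) ∧ u ∈ R ∧ v ∉ R}

/-- `M` is a matching contained in the edge set of `G`. -/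
def IsMatchingSet {V : Type*} (G : SimpleGraph V) (M : Set (Sym2 V)) : Prop :=
  M ⊆ G.edgeSet ∧ ∀ e ∈ M, ∀ f ∈ M, e ≠ f → ∀ v : V, v ∈ e → v ∉ f

/-- `M` is a matching cut of `G` with colouring `(R, Rᶜ)`. -/
def IsMatchingCutOn {V : Type*} (G : SimpleGraph V) (R : Set V) (M : Set (Sym2 V)) : Prop :=
  R.Nonempty ∧ Rᶜ.Nonempty ∧ M = crossEdges G R ∧ IsMatchingSet G M

/-- `M` is a matching cut of `G`. -/
def IsMatchingCut {V : Type*} (G : SimpleGraph V) (M : Set (Sym2 V)) : Prop :=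
  ∃ R : Set V, IsMatchingCutOn G R M

/-!
A claw-free vertex `u` with two distinct edges `ua`, `ub` on no triangle has no further
neighbour `c`: among `a, b, c` two are adjacent, and each such adjacency would put `ua` or `ub`
on a triangle. So `N(u) = {a, b}`. In particular every vertex meets at most two such edges, and
on a cycle made of such edges every vertex has both of its neighbours on the cycle; by
connectivity the cycle then passes through every vertex, all of degree 2, so `G` is a cycle.
-/

namespace SimpleGraph

variable {V : Type*} {G H : SimpleGraph V}

variable (G) in
def IsClawFree : Prop :=
  ∀ v a b c : V, G.Adj v a → G.Adj v b → G.Adj v c →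
    a ≠ b → a ≠ c → b ≠ c → (G.Adj a b ∨ G.Adj a c ∨ G.Adj b c)

variable (G) in
def nonTriangleEdges : Set (Sym2 V) :=
  {e | e ∈ G.edgeSet ∧ ∀ u v : V, e = s(u, v) → ¬ ∃ w : V, G.Adj u w ∧ G.Adj v w}

lemma adj_of_mem_nonTriangleEdges {u v : V} (h : s(u, v) ∈ G.nonTriangleEdges) : G.Adj u v :=
  h.1

lemma not_adj_of_mem_nonTriangleEdges {u v w : V} (h : s(u, v) ∈ G.nonTriangleEdges)
    (hu : G.Adj u w) : ¬ G.Adj v w :=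
  fun hv => h.2 u v rfl ⟨w, hu, hv⟩

lemma IsClawFree.neighborSet_eq_pair (hG : G.IsClawFree) {u a b : V} (hab : a ≠ b)
    (ha : s(u, a) ∈ G.nonTriangleEdges) (hb : s(u, b) ∈ G.nonTriangleEdges) :
    G.neighborSet u = {a, b} := by
  have hua := adj_of_mem_nonTriangleEdges ha
  have hub := adj_of_mem_nonTriangleEdges hb
  ext c
  simp only [mem_neighborSet, Set.mem_insert_iff, Set.mem_singleton_iff]
  refine ⟨fun huc => ?_, by rintro (rfl | rfl) <;> assumption⟩
  by_contra! hc
  rcases hG u a b c hua hub huc hab hc.1.symm hc.2.symm with h | h | h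
  · exact not_adj_of_mem_nonTriangleEdges ha hub h
  · exact not_adj_of_mem_nonTriangleEdges ha huc h
  · exact not_adj_of_mem_nonTriangleEdges hb huc h

lemma IsClawFree.ncard_neighborSet_eq_two (hG : G.IsClawFree) {u : V}
    (h : 2 ≤ {w | s(u, w) ∈ G.nonTriangleEdges}.ncard) : (G.neighborSet u).ncard = 2 := by
  obtain ⟨a, b, ha, hb, hab⟩ :=
    (Set.one_lt_ncard_iff (Set.finite_of_ncard_pos (by omega))).mp h
  rw [hG.neighborSet_eq_pair hab ha hb, Set.ncard_pair hab]

lemma IsClawFree.ncard_nonTriangleNeighbors_le_two (hG : G.IsClawFree) (u : V) :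
    {w | s(u, w) ∈ G.nonTriangleEdges}.ncard ≤ 2 := by
  by_contra! h
  have hdeg := hG.ncard_neighborSet_eq_two (u := u) (by omega)
  have hsub : {w | s(u, w) ∈ G.nonTriangleEdges} ⊆ G.neighborSet u :=
    fun _ hw => adj_of_mem_nonTriangleEdges hw
  have := Set.ncard_le_ncard hsub (Set.finite_of_ncard_pos (by omega))
  omega

lemma Walk.IsCycle.exists_ne_mem_edges {u v : V} {p : H.Walk u u} (hp : p.IsCycle)
    (hv : v ∈ p.support) : ∃ a b, a ≠ b ∧ s(v, a) ∈ p.edges ∧ s(v, b) ∈ p.edges := by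
  obtain ⟨a, b, hab, hnbr⟩ := Set.ncard_eq_two.mp (hp.ncard_neighborSet_toSubgraph_eq_two hv)
  have hmem : ∀ x ∈ p.toSubgraph.neighborSet v, s(v, x) ∈ p.edges := fun x hx =>
    p.mem_edges_toSubgraph.mp hx
  exact ⟨a, b, hab, hmem a (by simp [hnbr]), hmem b (by simp [hnbr])⟩

lemma Preconnected.mem_of_forall_adj_mem (hG : G.Preconnected) {S : Set V}
    (hS : ∀ u ∈ S, ∀ w, G.Adj u w → w ∈ S) {a : V} (ha : a ∈ S) (b : V) : b ∈ S := by
  obtain ⟨p⟩ := hG a b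
  induction p with
  | nil => exact ha
  | cons hadj _ ih => exact ih (hS _ ha _ hadj)

lemma IsClawFree.isAcyclic_fromEdgeSet_nonTriangleEdges (hG : G.IsClawFree)
    (hconn : G.Preconnected) (hnotcycle : ¬ ∀ v : V, (G.neighborSet v).ncard = 2) :
    (fromEdgeSet G.nonTriangleEdges).IsAcyclic := by
  intro z p hp
  have hcycle_nbrs : ∀ v ∈ p.support,
      G.neighborSet v ⊆ {x | x ∈ p.support} ∧ (G.neighborSet v).ncard = 2 := by
    intro v hv
    obtain ⟨a, b, hab, ha, hb⟩ := hp.exists_ne_mem_edges hv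
    have hnonTriangle : ∀ x, s(v, x) ∈ p.edges → s(v, x) ∈ G.nonTriangleEdges := by
      intro x hx
      have hx' := p.edges_subset_edgeSet hx
      rw [edgeSet_fromEdgeSet] at hx'
      exact hx'.1
    rw [hG.neighborSet_eq_pair hab (hnonTriangle a ha) (hnonTriangle b hb), Set.ncard_pair hab]
    refine ⟨?_, rfl⟩
    rintro x (rfl | rfl)
    exacts [p.snd_mem_support_of_mem_edges ha, p.snd_mem_support_of_mem_edges hb]
  have hall : ∀ v, v ∈ p.support := hconn.mem_of_forall_adj_mem
    (S := {x | x ∈ p.support}) (fun u hu _ hw => (hcycle_nbrs u hu).1 hw) p.start_mem_support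
  exact hnotcycle fun v => (hcycle_nbrs v (hall v)).2

end SimpleGraph

theorem stmt_10_general {V : Type*} (G : SimpleGraph V) (hconn : G.Connected)
    (hclawfree : ∀ v a b c : V, G.Adj v a → G.Adj v b → G.Adj v c →
      a ≠ b → a ≠ c → b ≠ c → (G.Adj a b ∨ G.Adj a c ∨ G.Adj b c))
    (hnotcycle : ¬ ∀ v : V, (G.neighborSet v).ncard = 2)
    (F : Set (Sym2 V))
    (hF : F = {e | e ∈ G.edgeSet ∧
      ∀ u v : V, e = s(u, v) → ¬ ∃ w : V, G.Adj u w ∧ G.Adj v w}) :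
    (∀ v : V, 2 ≤ {w : V | s(v, w) ∈ F}.ncard → (G.neighborSet v).ncard = 2) ∧
    (∀ v : V, {w : V | s(v, w) ∈ F}.ncard ≤ 2) ∧
    (SimpleGraph.fromEdgeSet F).IsAcyclic := by
  have hG : G.IsClawFree := hclawfree
  change F = G.nonTriangleEdges at hF
  subst hF
  exact ⟨fun _ => hG.ncard_neighborSet_eq_two, hG.ncard_nonTriangleNeighbors_le_two,
    hG.isAcyclic_fromEdgeSet_nonTriangleEdges hconn.preconnected hnotcycle⟩

/-- In a connected claw-free graph that is not a cycle, with F the set of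
edges not on any triangle: every vertex incident to at least two edges of F
has degree exactly 2 in G; consequently every component of G[F] is a path
(equivalently, G[F] is acyclic with maximum degree at most 2). -/
theorem stmt_10 {V : Type*} [Fintype V] (G : SimpleGraph V) (hconn : G.Connected)
    (hclawfree : ∀ v a b c : V, G.Adj v a → G.Adj v b → G.Adj v c →
      a ≠ b → a ≠ c → b ≠ c → (G.Adj a b ∨ G.Adj a c ∨ G.Adj b c))
    (hnotcycle : ¬ ∀ v : V, (G.neighborSet v).ncard = 2)
    (F : Set (Sym2 V))
    (hF : F = {e | e ∈ G.edgeSet ∧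
      ∀ u v : V, e = s(u, v) → ¬ ∃ w : V, G.Adj u w ∧ G.Adj v w}) :
    (∀ v : V, 2 ≤ {w : V | s(v, w) ∈ F}.ncard → (G.neighborSet v).ncard = 2) ∧
    (∀ v : V, {w : V | s(v, w) ∈ F}.ncard ≤ 2) ∧
    (SimpleGraph.fromEdgeSet F).IsAcyclic :=
  stmt_10_general G hconn hclawfree hnotcycle F hF
end

section
/- Let G be a connected graph and let F be the set of edges of G not on any triangle. Suppose G[F] contains a path v0 v1 v2 v3 of length 3 whose inner vertices v1 and v2 have degree 2 in G. Then {v0v1, v2v3} is a matching cut of G of size 2. -/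
/-- If G[F] (F = edges not on triangles) contains a path v0 v1 v2 v3 of length 3
whose inner vertices have degree 2 in G, then {v0v1, v2v3} is a matching cut
of size 2. -/
theorem stmt_12 {V : Type*} [Fintype V] (G : SimpleGraph V) (hconn : G.Connected)
    (F : Set (Sym2 V))
    (hF : F = {e | e ∈ G.edgeSet ∧
      ∀ u v : V, e = s(u, v) → ¬ ∃ w : V, G.Adj u w ∧ G.Adj v w})
    (v0 v1 v2 v3 : V)
    (hdistinct : [v0, v1, v2, v3].Pairwise (· ≠ ·))
    (h01 : s(v0, v1) ∈ F) (h12 : s(v1, v2) ∈ F) (h23 : s(v2, v3) ∈ F)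
    (hd1 : (G.neighborSet v1).ncard = 2) (hd2 : (G.neighborSet v2).ncard = 2) :
    IsMatchingCut G {s(v0, v1), s(v2, v3)} ∧
    ({s(v0, v1), s(v2, v3)} : Set (Sym2 V)).ncard = 2 := by

  subst hF
  simp only [List.pairwise_cons, List.mem_cons, List.mem_singleton] at hdistinct
  obtain ⟨h0, h1, h2, -⟩ := hdistinct
  have h01' : v0 ≠ v1 := h0 v1 (by simp)
  have h02 : v0 ≠ v2 := h0 v2 (by simp)
  have h03 : v0 ≠ v3 := h0 v3 (by simp)
  have h12' : v1 ≠ v2 := h1 v2 (by simp)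
  have h13 : v1 ≠ v3 := h1 v3 (by simp)
  have h23' : v2 ≠ v3 := h2 v3 (by simp)
  have a01 : G.Adj v0 v1 := h01.1
  have a12 : G.Adj v1 v2 := h12.1
  have a23 : G.Adj v2 v3 := h23.1
  have hN1 : G.neighborSet v1 = {v0, v2} := by
    refine (Set.eq_of_subset_of_ncard_le ?_ ?_ (Set.toFinite _)).symm
    · intro x hx
      rcases hx with h | h
      · subst h; exact a01.symm
      · simp only [Set.mem_singleton_iff] at h; subst h; exact a12
    · rw [hd1, Set.ncard_pair h02]
  have hN2 : G.neighborSet v2 = {v1, v3} := by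
    refine (Set.eq_of_subset_of_ncard_le ?_ ?_ (Set.toFinite _)).symm
    · intro x hx
      rcases hx with h | h
      · subst h; exact a12.symm
      · simp only [Set.mem_singleton_iff] at h; subst h; exact a23
    · rw [hd2, Set.ncard_pair h13]
  have hne : s(v0, v1) ≠ s(v2, v3) := by
    intro h
    rw [Sym2.eq_iff] at h
    rcases h with ⟨h, -⟩ | ⟨h, -⟩
    · exact h02 h
    · exact h03 h
  constructor
  · refine ⟨{v1, v2}, ⟨v1, by simp⟩, ⟨v0, by simp only [Set.mem_compl_iff, Set.mem_insert_iff, Set.mem_singleton_iff, not_or]; exact ⟨h01', h02⟩⟩, ?_, ?_, ?_⟩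
    · ext e
      constructor
      · rintro (rfl | rfl)
        · exact ⟨G.mem_edgeSet.2 a01, v1, v0, Sym2.eq_swap, by simp,
            by simp only [Set.mem_insert_iff, Set.mem_singleton_iff, not_or]; exact ⟨h01', h02⟩⟩
        · exact ⟨G.mem_edgeSet.2 a23, v2, v3, rfl, by simp, by simp only [Set.mem_insert_iff, Set.mem_singleton_iff, not_or]; exact ⟨h13.symm, h23'.symm⟩⟩
      · rintro ⟨he, u, v, rfl, hu, hv⟩
        simp only [Set.mem_insert_iff, Set.mem_singleton_iff, not_or] at hu hv
        rcases hu with rfl | rfl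
        · have : v ∈ G.neighborSet u := he
          rw [hN1] at this
          rcases this with rfl | rfl
          · left; exact Sym2.eq_swap
          · exact absurd rfl hv.2
        · have : v ∈ G.neighborSet u := he
          rw [hN2] at this
          rcases this with rfl | rfl
          · exact absurd rfl hv.1
          · right; rfl
    · rintro e (rfl | rfl)
      · exact G.mem_edgeSet.2 a01
      · exact G.mem_edgeSet.2 a23
    · rintro e (rfl | rfl) f (rfl | rfl) hef v hv <;>
        simp only [Sym2.mem_iff] at hv ⊢ <;>
        first
        | exact absurd rfl hef
        | (rcases hv with rfl | rfl <;> push_neg <;> tauto)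
  · exact Set.ncard_pair hne
end

section
/- Let G be a connected graph with maximum degree Δ ≥ 3, and let G' be obtained from G by replacing each vertex v by a clique C_v on Δ vertices and, for each edge uv of G, adding one edge between C_u and C_v such that every vertex of G' has at most one neighbour outside its own clique. Then G has an edge cut of size k if and only if G' has a matching cut of size k. -/
lemma aux_bij {V V' : Type*} (G : SimpleGraph V) (G' : SimpleGraph V')
    (C : V → Set V') (φ : V' → V)
    (hφ : ∀ x, x ∈ C (φ x)) (hφu : ∀ x v, x ∈ C v → v = φ x)
    (hcross : ∀ u v : V, u ≠ v → ∀ x ∈ C u, ∀ y ∈ C v, G'.Adj x y → G.Adj u v)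
    (hedge : ∀ u v : V, G.Adj u v →
      ∃! p : V' × V', p.1 ∈ C u ∧ p.2 ∈ C v ∧ G'.Adj p.1 p.2)
    (R : Set V) :
    Set.BijOn (Sym2.map φ) (crossEdges G' (φ ⁻¹' R)) (crossEdges G R) := by
  refine ⟨?_, ?_, ?_⟩
  · rintro e ⟨he, x, y, rfl, hx, hy⟩
    rw [SimpleGraph.mem_edgeSet] at he
    have hne : φ x ≠ φ y := fun h => hy (by simp only [Set.mem_preimage] at hx ⊢; rwa [← h])
    refine ⟨?_, φ x, φ y, by rw [Sym2.map_pair_eq], hx, hy⟩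
    rw [Sym2.map_pair_eq, SimpleGraph.mem_edgeSet]
    exact hcross _ _ hne x (hφ x) y (hφ y) he
  · rintro e ⟨he, x1, y1, rfl, hx1, hy1⟩ f ⟨hf, x2, y2, rfl, hx2, hy2⟩ heq
    rw [Sym2.map_pair_eq, Sym2.map_pair_eq, Sym2.eq_iff] at heq
    rw [SimpleGraph.mem_edgeSet] at he hf
    simp only [Set.mem_preimage] at hx1 hy1 hx2 hy2
    obtain ⟨hu, hv⟩ : φ x1 = φ x2 ∧ φ y1 = φ y2 := by
      rcases heq with h | h
      · exact h
      · exact absurd (h.1 ▸ hx1) hy2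
    have hadj : G.Adj (φ x1) (φ y1) :=
      hcross _ _ (fun h => hy1 (h ▸ hx1)) x1 (hφ x1) y1 (hφ y1) he
    obtain ⟨p, hp, hpu⟩ := hedge (φ x1) (φ y1) hadj
    have h1 : (x1, y1) = p := hpu (x1, y1) ⟨hφ x1, hφ y1, he⟩
    have h2 : (x2, y2) = p := hpu (x2, y2) ⟨by rw [hu]; exact hφ x2, by rw [hv]; exact hφ y2, hf⟩
    have := h1.trans h2.symm
    simp only [Prod.mk.injEq] at this
    rw [this.1, this.2]
  · rintro e ⟨he, u, v, rfl, hu, hv⟩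
    rw [SimpleGraph.mem_edgeSet] at he
    obtain ⟨⟨x, y⟩, ⟨hx, hy, hadj⟩, -⟩ := hedge u v he
    have hxu : φ x = u := (hφu x u hx).symm
    have hyv : φ y = v := (hφu y v hy).symm
    refine ⟨s(x, y), ⟨by rw [SimpleGraph.mem_edgeSet]; exact hadj, x, y, rfl, ?_, ?_⟩, ?_⟩
    · simp only [Set.mem_preimage, hxu]; exact hu
    · simp only [Set.mem_preimage, hyv]; exact hv
    · rw [Sym2.map_pair_eq, hxu, hyv]

lemma aux_matching {V V' : Type*} (G' : SimpleGraph V')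
    (C : V → Set V') (φ : V' → V)
    (hφ : ∀ x, x ∈ C (φ x)) (hφu : ∀ x v, x ∈ C v → v = φ x)
    (hone : ∀ x y z : V', G'.Adj x y → G'.Adj x z →
      (∀ v : V, x ∈ C v → y ∉ C v) → (∀ v : V, x ∈ C v → z ∉ C v) → y = z)
    (R : Set V) :
    IsMatchingSet G' (crossEdges G' (φ ⁻¹' R)) := by
  have key : ∀ (e : Sym2 V') (w : V'), e ∈ crossEdges G' (φ ⁻¹' R) → w ∈ e →
      ∃ a : V', e = s(w, a) ∧ G'.Adj w a ∧ φ w ≠ φ a := by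
    rintro e w ⟨he, x, y, rfl, hx, hy⟩ hw
    rw [SimpleGraph.mem_edgeSet] at he
    simp only [Set.mem_preimage] at hx hy
    rw [Sym2.mem_iff] at hw
    rcases hw with rfl | rfl
    · exact ⟨y, rfl, he, fun h => hy (h ▸ hx)⟩
    · exact ⟨x, Sym2.eq_swap, he.symm, fun h => hy (by rw [h]; exact hx)⟩
  refine ⟨fun e he => he.1, ?_⟩
  rintro e he f hf hne w hwe hwf
  obtain ⟨a, hea, haw, hane⟩ := key e w he hwe
  obtain ⟨b, hfb, hbw, hbne⟩ := key f w hf hwf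
  have hcond : ∀ (c : V'), φ w ≠ φ c → ∀ v : V, w ∈ C v → c ∉ C v := by
    intro c hnec v hwv hcv
    exact hnec ((hφu w v hwv).symm.trans (hφu c v hcv))
  exact hne (by rw [hea, hfb, hone w a b haw hbw (hcond a hane) (hcond b hbne)])

/-- Reduction from Max Cut to Maximum Matching Cut: G has an edge cut of size k
iff the clique-expanded graph G' has a matching cut of size k. -/
theorem stmt_13 {V V' : Type*} [Fintype V] [Fintype V']
    (G : SimpleGraph V) (G' : SimpleGraph V') (Δ k : ℕ) (hΔ : 3 ≤ Δ)
    (hconn : G.Connected)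
    (hmaxdeg : ∀ v : V, (G.neighborSet v).ncard ≤ Δ)
    (C : V → Set V')
    (hpart : ∀ x : V', ∃! v : V, x ∈ C v)
    (hsize : ∀ v : V, (C v).ncard = Δ)
    (hclique : ∀ v : V, ∀ x ∈ C v, ∀ y ∈ C v, x ≠ y → G'.Adj x y)
    (hcross : ∀ u v : V, u ≠ v → ∀ x ∈ C u, ∀ y ∈ C v, G'.Adj x y → G.Adj u v)
    (hedge : ∀ u v : V, G.Adj u v →
      ∃! p : V' × V', p.1 ∈ C u ∧ p.2 ∈ C v ∧ G'.Adj p.1 p.2)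
    (hone : ∀ x y z : V', G'.Adj x y → G'.Adj x z →
      (∀ v : V, x ∈ C v → y ∉ C v) → (∀ v : V, x ∈ C v → z ∉ C v) → y = z) :
    (∃ R : Set V, R.Nonempty ∧ Rᶜ.Nonempty ∧ (crossEdges G R).ncard = k) ↔
    (∃ M : Set (Sym2 V'), IsMatchingCut G' M ∧ M.ncard = k) := by
  obtain ⟨φ, hφ, hφu⟩ : ∃ φ : V' → V, (∀ x, x ∈ C (φ x)) ∧ ∀ x v, x ∈ C v → v = φ x :=
    ⟨fun x => (hpart x).choose, fun x => (hpart x).choose_spec.1,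
      fun x v h => by exact (hpart x).choose_spec.2 v h⟩
  have hCne : ∀ v : V, (C v).Nonempty := fun v =>
    Set.nonempty_of_ncard_ne_zero (by rw [hsize v]; omega)
  have hcard : ∀ R : Set V, (crossEdges G R).ncard = (crossEdges G' (φ ⁻¹' R)).ncard := by
    intro R
    have hb := aux_bij G G' C φ hφ hφu hcross hedge R
    rw [← hb.image_eq, Set.ncard_image_of_injOn hb.injOn]
  constructor
  · rintro ⟨R, hRne, hRcne, hRcard⟩
    refine ⟨crossEdges G' (φ ⁻¹' R), ⟨φ ⁻¹' R, ?_, ?_, rfl,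
      aux_matching G' C φ hφ hφu hone R⟩, by rw [← hcard R]; exact hRcard⟩
    · obtain ⟨v, hv⟩ := hRne
      obtain ⟨x, hx⟩ := hCne v
      exact ⟨x, by simp only [Set.mem_preimage, ← hφu x v hx]; exact hv⟩
    · obtain ⟨v, hv⟩ := hRcne
      obtain ⟨x, hx⟩ := hCne v
      refine ⟨x, fun h => hv ?_⟩
      simp only [Set.mem_preimage, ← hφu x v hx] at h
      exact h
  · rintro ⟨M, ⟨R', hR'ne, hR'cne, hMeq, hMmatch⟩, hMcard⟩
    have hmono : ∀ v : V, C v ⊆ R' ∨ C v ⊆ R'ᶜ := by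
      intro v
      by_contra h
      push_neg at h
      obtain ⟨y, hyv, hyR⟩ := Set.not_subset.mp h.1
      obtain ⟨x, hxv, hxR⟩ := Set.not_subset.mp h.2
      rw [Set.mem_compl_iff, not_not] at hxR
      have hxy : x ≠ y := fun h => hyR (h ▸ hxR)
      obtain ⟨z, hzv, hzx, hzy⟩ : ∃ z ∈ C v, z ≠ x ∧ z ≠ y := by
        by_contra hc
        push_neg at hc
        have hsub : C v ⊆ {x, y} := by
          intro z hz
          rcases eq_or_ne z x with rfl | hzx
          · exact Set.mem_insert _ _
          · exact Set.mem_insert_of_mem _ (hc z hz hzx)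
        have h2 : (C v).ncard ≤ 2 := le_trans (Set.ncard_le_ncard hsub
          ((Set.finite_singleton y).insert x))
          (le_trans (Set.ncard_insert_le x {y}) (by rw [Set.ncard_singleton]))
        rw [hsize v] at h2
        omega
      have hexy : s(x, y) ∈ M := by
        rw [hMeq]
        exact ⟨by rw [SimpleGraph.mem_edgeSet]; exact hclique v x hxv y hyv hxy,
          x, y, rfl, hxR, hyR⟩
      by_cases hzR : z ∈ R'
      · have hf : s(z, y) ∈ M := by
          rw [hMeq]
          exact ⟨by rw [SimpleGraph.mem_edgeSet]; exact hclique v z hzv y hyv hzy,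
            z, y, rfl, hzR, hyR⟩
        have hne : s(x, y) ≠ s(z, y) := by
          rw [Ne, Sym2.eq_iff]
          rintro (⟨rfl, -⟩ | ⟨rfl, rfl⟩)
          · exact hzx rfl
          · exact hzy rfl
        exact hMmatch.2 _ hexy _ hf hne y (Sym2.mem_mk_right x y) (Sym2.mem_mk_right z y)
      · have hf : s(x, z) ∈ M := by
          rw [hMeq]
          exact ⟨by rw [SimpleGraph.mem_edgeSet]; exact hclique v x hxv z hzv (Ne.symm hzx),
            x, z, rfl, hxR, hzR⟩
        have hne : s(x, y) ≠ s(x, z) := by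
          rw [Ne, Sym2.eq_iff]
          rintro (⟨-, rfl⟩ | ⟨rfl, rfl⟩)
          · exact hzy rfl
          · exact hzx rfl
        exact hMmatch.2 _ hexy _ hf hne x (Sym2.mem_mk_left x y) (Sym2.mem_mk_left x z)
    have hpre : φ ⁻¹' {v | C v ⊆ R'} = R' := by
      ext x
      simp only [Set.mem_preimage, Set.mem_setOf_eq]
      constructor
      · intro h
        exact h (hφ x)
      · intro hx
        rcases hmono (φ x) with h | h
        · exact h
        · exact absurd hx (h (hφ x))
    refine ⟨{v | C v ⊆ R'}, ?_, ?_, ?_⟩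
    · obtain ⟨x, hx⟩ := hR'ne
      refine ⟨φ x, ?_⟩
      rcases hmono (φ x) with h | h
      · exact h
      · exact absurd hx (h (hφ x))
    · obtain ⟨x, hx⟩ := hR'cne
      exact ⟨φ x, fun h => hx (h (hφ x))⟩
    · rw [hcard, hpre, ← hMeq]
      exact hMcard
end
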